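/- Let k ≥ 1 and let A = (k+1)·I_{k+1} ∈ ℝ^{(k+1)×(k+1)}. Then the minimum over all sets S of k column indices and all X ∈ ℝ^{k×(k+1)} of |A − A_S X|_∞ is at least (k+1) times the minimum of |A − B|_∞ over all matrices B ∈ ℝ^{(k+1)×(k+1)} of rank at most k. -/
import Mathlib


open Matrix

/-- The entrywise `ℓ_∞` norm of a matrix. -/
noncomputable def matSupNorm {n m : ℕ} (M : Matrix (Fin n) (Fin m) ℝ) : ℝ :=
  ⨆ i, ⨆ j, |M i j|

lemma abs_le_matSupNorm {n m : ℕ} (M : Matrix (Fin n) (Fin m) ℝ) (i : Fin n) (j : Fin m) :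
    |M i j| ≤ matSupNorm M := by
  have h1 : |M i j| ≤ ⨆ j, |M i j| :=
    le_ciSup (f := fun j => |M i j|) (Set.Finite.bddAbove (Set.finite_range _)) j
  exact h1.trans (le_ciSup (f := fun i => ⨆ j, |M i j|)
    (Set.Finite.bddAbove (Set.finite_range _)) i)

lemma matSupNorm_nonneg {n m : ℕ} [NeZero n] [NeZero m] (M : Matrix (Fin n) (Fin m) ℝ) :
    0 ≤ matSupNorm M :=
  (abs_nonneg _).trans (abs_le_matSupNorm M 0 0)

/-- Let `k ≥ 1` and `A = (k+1)·I_{k+1}`. Then for every set `S` of `k` column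
indices and every `X ∈ ℝ^{k×(k+1)}`, the cost `|A - A_S X|_∞` is at least `(k+1)` times the
minimum of `|A - B|_∞` over all matrices `B` of rank at most `k`. -/
theorem css_linf_lower_bound
    {k : ℕ} (hk : 1 ≤ k) (A : Matrix (Fin (k + 1)) (Fin (k + 1)) ℝ)
    (hA : A = ((k : ℝ) + 1) • (1 : Matrix (Fin (k + 1)) (Fin (k + 1)) ℝ)) :
    ∀ S : Fin k → Fin (k + 1), Function.Injective S →
      ∀ X : Matrix (Fin k) (Fin (k + 1)) ℝ,
        ((k : ℝ) + 1) *
            sInf {c : ℝ | ∃ B : Matrix (Fin (k + 1)) (Fin (k + 1)) ℝ, B.rank ≤ k ∧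
              c = matSupNorm (A - B)}
          ≤ matSupNorm (A - A.submatrix id S * X) := by
  intro S hS X
  have hnotsurj : ¬ Function.Surjective S := by
    intro h
    have := Fintype.card_le_of_surjective S h
    simp at this
  obtain ⟨i0, hi0⟩ := not_forall.mp hnotsurj
  have hi0' : ∀ l, S l ≠ i0 := fun l hl => hi0 ⟨l, hl⟩
  have hentry : (A - A.submatrix id S * X) i0 i0 = (k : ℝ) + 1 := by
    simp only [Matrix.sub_apply, Matrix.mul_apply, Matrix.submatrix_apply, id_eq]
    have hAS : ∀ l, A i0 (S l) = 0 := by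
      intro l
      simp [hA, Matrix.one_apply, (hi0' l).symm]
    rw [Finset.sum_eq_zero (fun l _ => by rw [hAS l, zero_mul])]
    simp [hA, Matrix.one_apply]
  have hRHS : (k : ℝ) + 1 ≤ matSupNorm (A - A.submatrix id S * X) := by
    have h := abs_le_matSupNorm (A - A.submatrix id S * X) i0 i0
    rw [hentry, abs_of_nonneg (by positivity)] at h
    exact h
  set B : Matrix (Fin (k + 1)) (Fin (k + 1)) ℝ := A - Matrix.of (fun _ _ => (1:ℝ)) with hB
  have hker : B.mulVec (fun _ => 1) = 0 := by
    funext i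
    simp [hB, Matrix.mulVec, dotProduct, Matrix.sub_apply, hA, Matrix.one_apply,
      Finset.sum_sub_distrib, Finset.sum_ite_eq]
  have hnt : (LinearMap.ker B.mulVecLin) ≠ ⊥ := by
    intro h
    have hm : (fun _ => (1:ℝ) : Fin (k+1) → ℝ) ∈ LinearMap.ker B.mulVecLin := by
      simp [LinearMap.mem_ker, Matrix.mulVecLin_apply, hker]
    rw [h, Submodule.mem_bot] at hm
    have := congrFun hm 0
    norm_num at this
  have hrank : B.rank ≤ k := by
    have h1 : 1 ≤ Module.finrank ℝ (LinearMap.ker B.mulVecLin) := by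
      rw [Submodule.one_le_finrank_iff]
      exact hnt
    have hrn := LinearMap.finrank_range_add_finrank_ker B.mulVecLin
    have hfr : Module.finrank ℝ (Fin (k+1) → ℝ) = k + 1 := by simp
    rw [hfr] at hrn
    rw [Matrix.rank]
    omega
  have hmem : (1:ℝ) ∈ {c : ℝ | ∃ B : Matrix (Fin (k + 1)) (Fin (k + 1)) ℝ, B.rank ≤ k ∧
      c = matSupNorm (A - B)} := by
    refine ⟨B, hrank, ?_⟩
    have hAB : A - B = Matrix.of (fun _ _ => (1:ℝ)) := by simp [hB]
    rw [hAB]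
    simp [matSupNorm]
  have hbdd : BddBelow {c : ℝ | ∃ B : Matrix (Fin (k + 1)) (Fin (k + 1)) ℝ, B.rank ≤ k ∧
      c = matSupNorm (A - B)} := by
    refine ⟨0, ?_⟩
    rintro c ⟨B', _, rfl⟩
    exact matSupNorm_nonneg _
  have hinf : sInf {c : ℝ | ∃ B : Matrix (Fin (k + 1)) (Fin (k + 1)) ℝ, B.rank ≤ k ∧
      c = matSupNorm (A - B)} ≤ 1 := csInf_le hbdd hmem
  have hle : ((k : ℝ) + 1) * sInf {c : ℝ | ∃ B : Matrix (Fin (k + 1)) (Fin (k + 1)) ℝ,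
      B.rank ≤ k ∧ c = matSupNorm (A - B)} ≤ ((k : ℝ) + 1) * 1 :=
    mul_le_mul_of_nonneg_left hinf (by positivity)
  linarith
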